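/- arXiv:1604.06980 — 3 statements merged into one kernel-verified Lean document; each statement's English description precedes it below -/
import Mathlib

section
/- Let 0 < Ω < π and m ∈ ℕ, and let A be the (m+1)×(m+1) real matrix with entries A_{p,k} = h(p−k) for p, k ∈ {0, 1, ..., m}. Then ‖A v‖₂ < ‖v‖₂ (Euclidean norms on ℂ^{m+1}) for every nonzero v ∈ ℂ^{m+1}, and consequently the matrix I_{m+1} − A is invertible, where I_{m+1} is the (m+1)×(m+1) identity matrix. -/
/-!
With `V(θ) = ∑ₖ vₖ e^{-ikθ}` one has `2π ⟪A v, v⟫ = ∫_{-Ω}^{Ω} |V|²`, and for `Ω = π` this is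
Parseval's identity `2π ‖v‖² = ∫_{-π}^{π} |V|²`. So `A` is a positive operator, and
`⟪A v, v⟫ < ‖v‖²` for `v ≠ 0` because `V`, a polynomial in `e^{-iθ}`, cannot vanish on `(Ω, π)`.
For a positive operator `T` with `⟪T x, x⟫ ≤ ‖x‖²`, expanding `⟪T (x - T x), x - T x⟫ ≥ 0` gives
`‖T x‖² ≤ ⟪T x, x⟫`; hence `‖A v‖ < ‖v‖`, so `A` has no nonzero fixed vector and `I - A` is
invertible.
-/

open Real

/-- Ideal low-pass filter kernel: `h(n) = sin(Ω n)/(π n)` for `n ≠ 0`, `h(0) = Ω/π`. -/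
noncomputable def lowPass (Ω : ℝ) (n : ℤ) : ℝ :=
  if n = 0 then Ω / Real.pi else Real.sin (Ω * n) / (Real.pi * n)

open Complex Matrix Set WithLp

open scoped InnerProductSpace ComplexConjugate

theorem LinearMap.IsPositive.norm_map_sq_le_re_inner {𝕜 E : Type*} [RCLike 𝕜]
    [NormedAddCommGroup E] [InnerProductSpace 𝕜 E] {T : E →ₗ[𝕜] E} (hT : T.IsPositive)
    (hT1 : ∀ x, RCLike.re ⟪T x, x⟫_𝕜 ≤ ‖x‖ ^ 2) (x : E) :
    ‖T x‖ ^ 2 ≤ RCLike.re ⟪T x, x⟫_𝕜 := by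
  have h := hT.re_inner_nonneg_left (x - T x)
  have hsymm : ⟪T (T x), x⟫_𝕜 = ⟪T x, T x⟫_𝕜 := hT.isSymmetric (T x) x
  simp only [map_sub, inner_sub_left, inner_sub_right, hsymm, inner_self_eq_norm_sq] at h
  linarith [hT1 (T x)]

theorem Matrix.det_one_sub_ne_zero_of_norm_toEuclideanLin_lt {𝕜 ι : Type*} [RCLike 𝕜]
    [Fintype ι] [DecidableEq ι] {M : Matrix ι ι 𝕜}
    (hM : ∀ x ≠ 0, ‖toEuclideanLin M x‖ < ‖x‖) : (1 - M).det ≠ 0 := by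
  intro hdet
  obtain ⟨v, hv, hfix⟩ := exists_mulVec_eq_zero_iff.mpr hdet
  rw [sub_mulVec, one_mulVec, sub_eq_zero] at hfix
  have hlt := hM (toLp 2 v) (by simpa using hv)
  rw [toLpLin_toLp, toLin'_apply, ← hfix] at hlt
  exact lt_irrefl _ hlt

lemma lowPass_neg (Ω : ℝ) (j : ℤ) : lowPass Ω (-j) = lowPass Ω j := by
  rcases eq_or_ne j 0 with rfl | hj
  · rw [neg_zero]
  · simp only [lowPass, neg_eq_zero, hj, if_false, Int.cast_neg, mul_neg, Real.sin_neg,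
      neg_div_neg_eq]

lemma lowPass_pi (j : ℤ) : lowPass π j = if j = 0 then 1 else 0 := by
  unfold lowPass
  split_ifs with hj
  · exact div_self pi_ne_zero
  · rw [mul_comm, Real.sin_int_mul_pi, zero_div]

lemma integral_exp_int_mul_I (a : ℝ) (j : ℤ) :
    ∫ θ in (-a)..a, cexp (j * θ * I) = 2 * π * lowPass a j := by
  have hπ : (π : ℂ) ≠ 0 := ofReal_ne_zero.mpr pi_ne_zero
  rcases eq_or_ne j 0 with rfl | hj
  · simp only [lowPass, if_true, Int.cast_zero, zero_mul, Complex.exp_zero,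
      intervalIntegral.integral_const, sub_neg_eq_add, real_smul, mul_one, ofReal_add,
      ofReal_div]
    field_simp
    ring
  · have hjI : (j : ℂ) * I ≠ 0 := by simp [hj]
    have hj' : (j : ℂ) ≠ 0 := by exact_mod_cast hj
    simp_rw [mul_right_comm _ _ I]
    rw [integral_exp_mul_complex hjI, lowPass, if_neg hj]
    push_cast
    rw [Complex.sin]
    field_simp
    ring_nf
    simp only [I_sq]
    ring

noncomputable def trigPoly {n : ℕ} (v : Fin n → ℂ) (θ : ℝ) : ℂ :=
  ∑ k, v k * cexp (-(k * θ * I))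

@[fun_prop]
lemma continuous_trigPoly {n : ℕ} (v : Fin n → ℂ) : Continuous (trigPoly v) := by
  unfold trigPoly
  fun_prop

lemma trigPoly_eq_eval_ofFn {n : ℕ} (v : Fin n → ℂ) (θ : ℝ) :
    trigPoly v θ = (Polynomial.ofFn n v).eval (cexp (-(θ * I))) := by
  rw [Polynomial.ofFn_eq_sum_monomial, Polynomial.eval_finsetSum]
  refine Finset.sum_congr rfl fun k _ => ?_
  rw [Polynomial.eval_monomial, ← Complex.exp_nat_mul]
  ring_nf

lemma exists_trigPoly_ne_zero {n : ℕ} {v : Fin n → ℂ} (hv : v ≠ 0) {a b : ℝ} (ha : 0 ≤ a)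
    (hab : a < b) (hb : b ≤ π) : ∃ θ ∈ Ioo a b, trigPoly v θ ≠ 0 := by
  by_contra! hzero
  have hsub : Ioo a b ⊆ Icc 0 π := Ioo_subset_Icc_self.trans (Icc_subset_Icc ha hb)
  have hinj : InjOn (fun θ : ℝ => cexp (-(θ * I))) (Ioo a b) := by
    intro x hx y hy hxy
    refine injOn_cos (hsub hx) (hsub hy) ?_
    simpa [← neg_mul, ← ofReal_neg, exp_ofReal_mul_I_re] using congrArg re hxy
  have hroots : (fun θ : ℝ => cexp (-(θ * I))) '' Ioo a b ⊆
      {z | (Polynomial.ofFn n v).IsRoot z} := by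
    rintro _ ⟨θ, hθ, rfl⟩
    exact (trigPoly_eq_eval_ofFn v θ).symm.trans (hzero θ hθ)
  have hq : Polynomial.ofFn n v = 0 :=
    Polynomial.eq_zero_of_infinite_isRoot _ (((Ioo_infinite hab).image hinj).mono hroots)
  exact hv (Polynomial.injective_ofFn n (hq.trans (map_zero _).symm))

lemma integral_norm_sq_trigPoly_pos {n : ℕ} {v : Fin n → ℂ} (hv : v ≠ 0) {a b : ℝ}
    (ha : 0 ≤ a) (hab : a < b) (hb : b ≤ π) : 0 < ∫ θ in a..b, ‖trigPoly v θ‖ ^ 2 := by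
  obtain ⟨c, hc, hne⟩ := exists_trigPoly_ne_zero hv ha hab hb
  exact intervalIntegral.integral_pos hab (by fun_prop) (fun _ _ => by positivity)
    ⟨c, Ioo_subset_Icc_self hc, by positivity⟩

lemma conj_trigPoly_mul_trigPoly {n : ℕ} (v : Fin n → ℂ) (θ : ℝ) :
    conj (trigPoly v θ) * trigPoly v θ =
      ∑ p, ∑ k, conj (v p) * v k * cexp (((p - k : ℤ) : ℂ) * θ * I) := by
  unfold trigPoly
  rw [map_sum, Finset.sum_mul]
  refine Finset.sum_congr rfl fun p _ => ?_
  rw [Finset.mul_sum]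
  refine Finset.sum_congr rfl fun k _ => ?_
  rw [map_mul, ← exp_conj, mul_mul_mul_comm, ← Complex.exp_add]
  congr 2
  simp only [map_neg, map_mul, conj_ofReal, conj_I, conj_natCast, Int.cast_sub, Int.cast_natCast]
  ring

noncomputable def lowPassMatrix (Ω : ℝ) (n : ℕ) : Matrix (Fin n) (Fin n) ℂ :=
  Matrix.of fun p k => (lowPass Ω (p - k) : ℂ)

lemma lowPassMatrix_pi (n : ℕ) : lowPassMatrix π n = 1 := by
  ext p k
  simp only [lowPassMatrix, of_apply, lowPass_pi, sub_eq_zero, Nat.cast_inj, Fin.val_inj,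
    one_apply]
  split_ifs <;> simp

lemma isHermitian_lowPassMatrix (Ω : ℝ) (n : ℕ) : (lowPassMatrix Ω n).IsHermitian := by
  ext p k
  simp [lowPassMatrix, ← lowPass_neg Ω (p - k)]

lemma integral_conj_trigPoly_mul_trigPoly {n : ℕ} (a : ℝ) (v : Fin n → ℂ) :
    ∫ θ in (-a)..a, conj (trigPoly v θ) * trigPoly v θ =
      2 * π * (star v ⬝ᵥ lowPassMatrix a n *ᵥ v) := by
  simp only [conj_trigPoly_mul_trigPoly]
  rw [intervalIntegral.integral_finsetSum
    fun p _ => (by fun_prop : Continuous _).intervalIntegrable _ _]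
  simp only [dotProduct, mulVec, lowPassMatrix, of_apply, Finset.mul_sum]
  refine Finset.sum_congr rfl fun p _ => ?_
  rw [intervalIntegral.integral_finsetSum
    fun k _ => (by fun_prop : Continuous _).intervalIntegrable _ _]
  refine Finset.sum_congr rfl fun k _ => ?_
  rw [intervalIntegral.integral_const_mul, integral_exp_int_mul_I]
  simp only [Pi.star_apply, RCLike.star_def]
  ring

lemma integral_norm_sq_trigPoly {n : ℕ} (a : ℝ) (x : EuclideanSpace ℂ (Fin n)) :
    ∫ θ in (-a)..a, ‖trigPoly (ofLp x) θ‖ ^ 2 =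
      2 * π * RCLike.re ⟪toEuclideanLin (lowPassMatrix a n) x, x⟫_ℂ := by
  have hinner : RCLike.re ⟪toEuclideanLin (lowPassMatrix a n) x, x⟫_ℂ =
      (star (ofLp x) ⬝ᵥ lowPassMatrix a n *ᵥ ofLp x).re := by
    rw [inner_re_symm, EuclideanSpace.inner_eq_star_dotProduct, dotProduct_comm]
    rfl
  calc ∫ θ in (-a)..a, ‖trigPoly (ofLp x) θ‖ ^ 2
      = (∫ θ in (-a)..a, conj (trigPoly (ofLp x) θ) * trigPoly (ofLp x) θ).re := by
        simp only [conj_mul', ← ofReal_pow, intervalIntegral.integral_ofReal, ofReal_re]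
    _ = 2 * π * RCLike.re ⟪toEuclideanLin (lowPassMatrix a n) x, x⟫_ℂ := by
        rw [integral_conj_trigPoly_mul_trigPoly, hinner, ← ofReal_ofNat, ← ofReal_mul,
          re_ofReal_mul]

lemma integral_norm_sq_trigPoly_pi {n : ℕ} (x : EuclideanSpace ℂ (Fin n)) :
    ∫ θ in (-π)..π, ‖trigPoly (ofLp x) θ‖ ^ 2 = 2 * π * ‖x‖ ^ 2 := by
  have hone : toEuclideanLin (1 : Matrix (Fin n) (Fin n) ℂ) x = x := by simp
  rw [integral_norm_sq_trigPoly, lowPassMatrix_pi, hone, inner_self_eq_norm_sq]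

lemma isPositive_toEuclideanLin_lowPassMatrix {Ω : ℝ} (hΩ : 0 ≤ Ω) (n : ℕ) :
    (toEuclideanLin (lowPassMatrix Ω n)).IsPositive := by
  refine ⟨isSymmetric_toEuclideanLin_iff.mpr (isHermitian_lowPassMatrix Ω n), fun x => ?_⟩
  have hint := integral_norm_sq_trigPoly Ω x
  have hnonneg : 0 ≤ ∫ θ in (-Ω)..Ω, ‖trigPoly (ofLp x) θ‖ ^ 2 :=
    intervalIntegral.integral_nonneg (by linarith) fun _ _ => by positivity
  nlinarith [pi_pos]

lemma re_inner_lowPassMatrix_lt_norm_sq {Ω : ℝ} (hΩ0 : 0 ≤ Ω) (hΩπ : Ω < π) {n : ℕ}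
    {x : EuclideanSpace ℂ (Fin n)} (hx : x ≠ 0) :
    RCLike.re ⟪toEuclideanLin (lowPassMatrix Ω n) x, x⟫_ℂ < ‖x‖ ^ 2 := by
  set f : ℝ → ℝ := fun θ => ‖trigPoly (ofLp x) θ‖ ^ 2
  have hf : ∀ a b, IntervalIntegrable f MeasureTheory.volume a b :=
    fun a b => (by fun_prop : Continuous f).intervalIntegrable a b
  have hsplit : ∫ θ in (-π)..π, f θ =
      (∫ θ in (-π)..(-Ω), f θ) + (∫ θ in (-Ω)..Ω, f θ) + ∫ θ in Ω..π, f θ := by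
    rw [intervalIntegral.integral_add_adjacent_intervals (hf _ _) (hf _ _),
      intervalIntegral.integral_add_adjacent_intervals (hf _ _) (hf _ _)]
  have hleft : 0 ≤ ∫ θ in (-π)..(-Ω), f θ :=
    intervalIntegral.integral_nonneg (by linarith) fun _ _ => by positivity
  have hright : 0 < ∫ θ in Ω..π, f θ :=
    integral_norm_sq_trigPoly_pos (by simpa using hx) hΩ0 hΩπ le_rfl
  have hΩ := integral_norm_sq_trigPoly Ω x
  have hπ := integral_norm_sq_trigPoly_pi x
  have hlt : 2 * π * RCLike.re ⟪toEuclideanLin (lowPassMatrix Ω n) x, x⟫_ℂ < 2 * π * ‖x‖ ^ 2 := by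
    linarith
  exact lt_of_mul_lt_mul_left hlt (by positivity)

lemma norm_toEuclideanLin_lowPassMatrix_lt {Ω : ℝ} (hΩ0 : 0 ≤ Ω) (hΩπ : Ω < π) {n : ℕ}
    {x : EuclideanSpace ℂ (Fin n)} (hx : x ≠ 0) :
    ‖toEuclideanLin (lowPassMatrix Ω n) x‖ < ‖x‖ := by
  have hle : ∀ y : EuclideanSpace ℂ (Fin n),
      RCLike.re ⟪toEuclideanLin (lowPassMatrix Ω n) y, y⟫_ℂ ≤ ‖y‖ ^ 2 := by
    intro y
    rcases eq_or_ne y 0 with rfl | hy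
    · simp
    · exact (re_inner_lowPassMatrix_lt_norm_sq hΩ0 hΩπ hy).le
  refine lt_of_pow_lt_pow_left₀ 2 (norm_nonneg x) ?_
  exact ((isPositive_toEuclideanLin_lowPassMatrix hΩ0 n).norm_map_sq_le_re_inner hle x).trans_lt
    (re_inner_lowPassMatrix_lt_norm_sq hΩ0 hΩπ hx)

theorem lowpass_matrix_contraction_and_invertibility (Ω : ℝ) (hΩ0 : 0 < Ω)
    (hΩπ : Ω < Real.pi) (m : ℕ) (A : Matrix (Fin (m + 1)) (Fin (m + 1)) ℝ)
    (hA : ∀ p k : Fin (m + 1), A p k = lowPass Ω ((p : ℤ) - (k : ℤ))) :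
    (∀ v : Fin (m + 1) → ℂ, v ≠ 0 →
      Real.sqrt (∑ p : Fin (m + 1), ‖(A.map (fun a : ℝ => (a : ℂ))).mulVec v p‖ ^ 2) <
        Real.sqrt (∑ p : Fin (m + 1), ‖v p‖ ^ 2)) ∧
    IsUnit ((1 : Matrix (Fin (m + 1)) (Fin (m + 1)) ℝ) - A) := by
  have hAL : A.map (fun a : ℝ => (a : ℂ)) = lowPassMatrix Ω (m + 1) := by
    ext p k
    simp [lowPassMatrix, hA]
  have hcontr : ∀ x ≠ 0, ‖toEuclideanLin (lowPassMatrix Ω (m + 1)) x‖ < ‖x‖ :=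
    fun x hx => norm_toEuclideanLin_lowPassMatrix_lt hΩ0.le hΩπ hx
  refine ⟨fun v hv => ?_, ?_⟩
  · have hlt := hcontr (toLp 2 v) (by simpa using hv)
    rwa [EuclideanSpace.norm_eq, EuclideanSpace.norm_eq, toLpLin_toLp, toLin'_apply,
      ← hAL] at hlt
  · have hdet := det_one_sub_ne_zero_of_norm_toEuclideanLin_lt hcontr
    have hmap : ofRealHom.mapMatrix (1 - A) = 1 - lowPassMatrix Ω (m + 1) := by
      rw [map_sub, map_one, ← hAL]
      rfl
    rw [← hmap, ← RingHom.map_det] at hdet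
    rw [isUnit_iff_isUnit_det, isUnit_iff_ne_zero, ← ofReal_ne_zero]
    exact hdet
end

section
/- Let 0 < Ω < π and let x : ℤ → ℂ be an Ω-band-limited sequence. Then for every s ∈ ℤ, the series Σ_{t∈ℤ, t≠s} x(t) · sinc(Ω(s−t)) converges absolutely and x(s) = (Ω/(π−Ω)) · Σ_{t∈ℤ, t≠s} x(t) · sinc(Ω(s−t)). -/
open MeasureTheory Real Set

def IsBandLimited (Ω : ℝ) (x : ℤ → ℂ) : Prop :=
  ∃ g : ℝ → ℂ, MemLp g 2 (volume.restrict (Set.Icc (-Ω) Ω)) ∧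
    ∀ t : ℤ, x t = (1 / (2 * (Real.pi : ℂ))) *
      ∫ ω in Set.Icc (-Ω) Ω, g ω * Complex.exp (Complex.I * (ω : ℂ) * (t : ℂ))

/-- `sinc u = sin u / u` for `u ≠ 0`, `sinc 0 = 1`. -/
noncomputable def rsinc (u : ℝ) : ℝ := if u = 0 then 1 else Real.sin u / u

open scoped ComplexConjugate

/-!
The sequence `x` is the sequence of Fourier coefficients `x t = Ĝ(-t)` of the spectrum `G`,
extended by zero from `[-Ω, Ω]` to the circle `(-π, π]`, and `(Ω / π) sinc (Ω (s - t))` is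
likewise the coefficient `K̂(-t)` of the truncated exponential
`K ω = 𝟙_{[-Ω, Ω]}(ω) e^{-iωs}` (`sincKernel Ω s`).
Parseval's identity for the pair `K, G ∈ L²(-π, π]` gives
`∑ₜ x t · sinc (Ω (s - t)) = (π / Ω) · (1 / 2π) ∫ G(ω) e^{iωs} dω = (π / Ω) · x s`, with absolute
convergence by Cauchy–Schwarz. Removing the term `t = s`, which equals `x s`, leaves
`(π / Ω - 1) · x s`.
-/

lemma summable_norm_mul_of_summable_sq {ι R : Type*} [NonUnitalSeminormedRing R] {u v : ι → R}
    (hu : Summable fun i => ‖u i‖ ^ 2) (hv : Summable fun i => ‖v i‖ ^ 2) :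
    Summable fun i => ‖u i * v i‖ := by
  refine .of_nonneg_of_le (fun _ => norm_nonneg _) (fun i => ?_) ((hu.add hv).div_const 2)
  nlinarith [norm_mul_le (u i) (v i), sq_nonneg (‖u i‖ - ‖v i‖)]

theorem hasSum_conj_fourierCoeffOn_mul {a b : ℝ} (hab : a < b) {f g : ℝ → ℂ}
    (hf : MemLp f 2 (volume.restrict (Ioc a b))) (hg : MemLp g 2 (volume.restrict (Ioc a b))) :
    HasSum (fun n => conj (fourierCoeffOn hab f n) * fourierCoeffOn hab g n)
      ((b - a)⁻¹ • ∫ x in a..b, conj (f x) * g x) := by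
  have := Fact.mk (sub_pos.2 hab)
  rw [← add_sub_cancel a b] at hf hg
  have hF := hf.memLp_liftIoc.haarAddCircle
  have hG := hg.memLp_liftIoc.haarAddCircle
  have hcoeff : ∀ n, inner ℂ hF.toLp (fourierBasis n) * inner ℂ (fourierBasis n) hG.toLp =
      conj (fourierCoeffOn hab f n) * fourierCoeffOn hab g n := by
    intro n
    rw [← inner_conj_symm, ← HilbertBasis.repr_apply_apply, ← HilbertBasis.repr_apply_apply,
      fourierBasis_repr, fourierBasis_repr, fourierCoeff_congr_ae hF.coeFn_toLp,
      fourierCoeff_congr_ae hG.coeFn_toLp]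
    simp [fourierCoeff_liftIoc_eq]
  have hinner : inner ℂ hF.toLp hG.toLp = (b - a)⁻¹ • ∫ x in a..b, conj (f x) * g x := by
    have hprod : (fun t => inner ℂ ((hF.toLp : AddCircle (b - a) → ℂ) t)
        ((hG.toLp : AddCircle (b - a) → ℂ) t)) =ᵐ[AddCircle.haarAddCircle]
        AddCircle.liftIoc (b - a) a (fun x => conj (f x) * g x) := by
      filter_upwards [hF.coeFn_toLp, hG.coeFn_toLp] with t hFt hGt
      rw [hFt, hGt, RCLike.inner_apply']
      rfl
    rw [L2.inner_def, integral_congr_ae hprod, AddCircle.integral_haarAddCircle,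
      AddCircle.integral_liftIoc_eq_intervalIntegral, add_sub_cancel]
  simpa only [hcoeff, hinner] using fourierBasis.hasSum_inner_mul_inner hF.toLp hG.toLp

theorem summable_norm_conj_fourierCoeffOn_mul {a b : ℝ} (hab : a < b) {f g : ℝ → ℂ}
    (hf : MemLp f 2 (volume.restrict (Ioc a b))) (hg : MemLp g 2 (volume.restrict (Ioc a b))) :
    Summable fun n => ‖conj (fourierCoeffOn hab f n) * fourierCoeffOn hab g n‖ :=
  summable_norm_mul_of_summable_sq (by simpa using (hasSum_sq_fourierCoeffOn hab hf).summable)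
    (hasSum_sq_fourierCoeffOn hab hg).summable

lemma intervalIntegral_indicator_of_subset {E : Type*} [NormedAddCommGroup E] [NormedSpace ℝ E]
    {a b : ℝ} (hab : a ≤ b) {S : Set ℝ} (hS : MeasurableSet S) (hSab : S ⊆ Ioc a b) (f : ℝ → E) :
    ∫ x in a..b, S.indicator f x = ∫ x in S, f x := by
  rw [intervalIntegral.integral_of_le hab, setIntegral_indicator hS, inter_eq_right.2 hSab]

lemma Icc_subset_Ioc_neg_pi {Ω : ℝ} (hΩπ : Ω < π) : Icc (-Ω) Ω ⊆ Ioc (-π) π :=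
  fun _ hω => ⟨by linarith [hω.1], by linarith [hω.2]⟩

lemma fourierCoeffOn_neg_pi_pi_neg (f : ℝ → ℂ) (t : ℤ) :
    fourierCoeffOn (neg_lt_self pi_pos) f (-t) =
      1 / (2 * (π : ℂ)) * ∫ ω in -π..π, f ω * Complex.exp (Complex.I * ω * t) := by
  rw [fourierCoeffOn_eq_integral, neg_neg, sub_neg_eq_add, ← two_mul, Complex.real_smul]
  push_cast
  congr 1
  refine intervalIntegral.integral_congr fun ω _ => ?_
  rw [fourier_coe_apply, smul_eq_mul, mul_comm]
  congr 2
  push_cast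
  field_simp

lemma fourierCoeffOn_indicator_Icc {Ω : ℝ} (hΩπ : Ω < π) (f : ℝ → ℂ) (t : ℤ) :
    fourierCoeffOn (neg_lt_self pi_pos) ((Icc (-Ω) Ω).indicator f) (-t) =
      1 / (2 * (π : ℂ)) * ∫ ω in Icc (-Ω) Ω, f ω * Complex.exp (Complex.I * ω * t) := by
  have hind : ∀ ω, (Icc (-Ω) Ω).indicator f ω * Complex.exp (Complex.I * ω * t) =
      (Icc (-Ω) Ω).indicator (fun ω => f ω * Complex.exp (Complex.I * ω * t)) ω :=
    fun _ => (indicator_mul_left _ f fun ω : ℝ => Complex.exp (Complex.I * ω * t)).symm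
  simp_rw [fourierCoeffOn_neg_pi_pi_neg, hind, intervalIntegral_indicator_of_subset
    (neg_le_self pi_pos.le) measurableSet_Icc (Icc_subset_Ioc_neg_pi hΩπ)]

lemma integral_Icc_cexp_I_mul {Ω : ℝ} (hΩ : 0 < Ω) (u : ℝ) :
    ∫ ω in Icc (-Ω) Ω, Complex.exp (Complex.I * ω * u) = 2 * Ω * sinc (Ω * u) := by
  rw [integral_Icc_eq_integral_Ioc, ← intervalIntegral.integral_of_le (by linarith)]
  rcases eq_or_ne u 0 with rfl | hu
  · simp
    ring
  have hc : Complex.I * u ≠ 0 := mul_ne_zero Complex.I_ne_zero (by exact_mod_cast hu)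
  have hΩ' : (Ω : ℂ) ≠ 0 := by exact_mod_cast hΩ.ne'
  have hu' : (u : ℂ) ≠ 0 := by exact_mod_cast hu
  simp_rw [mul_right_comm Complex.I, integral_exp_mul_complex hc,
    sinc_of_ne_zero (mul_ne_zero hΩ.ne' hu)]
  push_cast
  rw [Complex.sin]
  field_simp
  ring_nf
  rw [Complex.I_sq]
  ring

noncomputable def sincKernel (Ω : ℝ) (s : ℤ) : ℝ → ℂ :=
  (Icc (-Ω) Ω).indicator fun ω => Complex.exp (-(Complex.I * ω * s))

lemma memLp_sincKernel (Ω : ℝ) (s : ℤ) :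
    MemLp (sincKernel Ω s) 2 (volume.restrict (Ioc (-π) π)) := by
  refine .of_bound ?_ 1 (.of_forall fun ω => ?_)
  · exact (Measurable.indicator (by fun_prop) measurableSet_Icc).aestronglyMeasurable
  · refine (norm_indicator_le_norm_self _ _).trans (le_of_eq ?_)
    simp [Complex.norm_exp]

lemma fourierCoeffOn_sincKernel {Ω : ℝ} (hΩ0 : 0 < Ω) (hΩπ : Ω < π) (s t : ℤ) :
    fourierCoeffOn (neg_lt_self pi_pos) (sincKernel Ω s) (-t) =
      ((Ω / π * sinc (Ω * (s - t)) : ℝ) : ℂ) := by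
  have hexp : ∀ ω : ℝ, Complex.exp (-(Complex.I * ω * s)) * Complex.exp (Complex.I * ω * t) =
      Complex.exp (Complex.I * ω * ((t - s : ℝ) : ℂ)) := fun ω => by
    rw [← Complex.exp_add]
    push_cast
    ring_nf
  have hπ : (π : ℂ) ≠ 0 := by exact_mod_cast pi_ne_zero
  rw [sincKernel, fourierCoeffOn_indicator_Icc hΩπ]
  simp_rw [hexp]
  rw [integral_Icc_cexp_I_mul hΩ0, show Ω * (t - s) = -(Ω * (s - t)) by ring, sinc_neg]
  push_cast
  field_simp

lemma conj_sincKernel_mul_indicator (Ω : ℝ) (s : ℤ) (g : ℝ → ℂ) (ω : ℝ) :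
    conj (sincKernel Ω s ω) * (Icc (-Ω) Ω).indicator g ω =
      (Icc (-Ω) Ω).indicator (fun ω => g ω * Complex.exp (Complex.I * ω * s)) ω := by
  by_cases hω : ω ∈ Icc (-Ω) Ω
  · simp [sincKernel, indicator_of_mem hω, ← Complex.exp_conj, mul_comm]
  · simp [sincKernel, indicator_of_notMem hω]

theorem IsBandLimited.hasSum_mul_sinc {Ω : ℝ} (hΩ0 : 0 < Ω) (hΩπ : Ω < π) {x : ℤ → ℂ}
    (hx : IsBandLimited Ω x) (s : ℤ) :
    Summable (fun t : ℤ => ‖x t * sinc (Ω * (s - t))‖) ∧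
      HasSum (fun t : ℤ => x t * sinc (Ω * (s - t))) (π / Ω * x s) := by
  obtain ⟨g, hg, hxg⟩ := hx
  have hπ := neg_lt_self pi_pos
  set G := (Icc (-Ω) Ω).indicator g
  have hGL2 : MemLp G 2 (volume.restrict (Ioc (-π) π)) :=
    ((memLp_indicator_iff_restrict measurableSet_Icc).2 hg).restrict _
  have hx_coeff : ∀ t : ℤ, x t = fourierCoeffOn hπ G (-t) := fun t => by
    rw [fourierCoeffOn_indicator_Icc hΩπ, hxg]
  have hinner : (π - -π)⁻¹ • ∫ ω in -π..π, conj (sincKernel Ω s ω) * G ω = x s := by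
    simp_rw [G, conj_sincKernel_mul_indicator, intervalIntegral_indicator_of_subset
      hπ.le measurableSet_Icc (Icc_subset_Ioc_neg_pi hΩπ), hxg s, Complex.real_smul]
    push_cast
    ring
  have hsummable := (summable_norm_conj_fourierCoeffOn_mul hπ (memLp_sincKernel Ω s)
    hGL2).comp_injective neg_injective
  have hparseval := (Equiv.neg ℤ).hasSum_iff.2
    (hasSum_conj_fourierCoeffOn_mul hπ (memLp_sincKernel Ω s) hGL2)
  simp only [Function.comp_def, Equiv.neg_apply, fourierCoeffOn_sincKernel hΩ0 hΩπ,
    ← hx_coeff, hinner, Complex.conj_ofReal] at hsummable hparseval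
  have hΩ' : (Ω : ℂ) ≠ 0 := by exact_mod_cast hΩ0.ne'
  have hπ' : (π : ℂ) ≠ 0 := by exact_mod_cast pi_ne_zero
  constructor
  · refine (hsummable.mul_left (π / Ω)).congr fun t => ?_
    simp only [norm_mul, Complex.norm_real, Real.norm_of_nonneg (div_pos hΩ0 pi_pos).le]
    field_simp
  · refine (hparseval.mul_left (π / Ω : ℂ)).congr_fun fun t => ?_
    push_cast
    field_simp

lemma rsinc_eq_sinc : rsinc = sinc := rfl

theorem bandlimited_single_value_formula (Ω : ℝ) (hΩ0 : 0 < Ω) (hΩπ : Ω < Real.pi)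
    (x : ℤ → ℂ) (hx : IsBandLimited Ω x) :
    ∀ s : ℤ,
      Summable (fun t : {t : ℤ // t ≠ s} =>
        ‖x (t : ℤ) * (rsinc (Ω * ((s : ℝ) - (t : ℤ))) : ℂ)‖) ∧
      x s = ((Ω / (Real.pi - Ω) : ℝ) : ℂ) *
        ∑' t : {t : ℤ // t ≠ s}, x (t : ℤ) * (rsinc (Ω * ((s : ℝ) - (t : ℤ))) : ℂ) := by
  intro s
  simp only [rsinc_eq_sinc]
  obtain ⟨hnorm, hsum⟩ := hx.hasSum_mul_sinc hΩ0 hΩπ s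
  set f : ℤ → ℂ := fun t => x t * (sinc (Ω * (s - t)) : ℂ)
  have hoff : HasSum (f ∘ (↑) : ({s}ᶜ : Set ℤ) → ℂ) (π / Ω * x s - x s) := by
    refine (hasSum_singleton s f).hasSum_compl_iff.2 ?_
    simpa [f] using hsum
  have htsum : ∑' t : {t : ℤ // t ≠ s}, f t = π / Ω * x s - x s := hoff.tsum_eq
  have hπΩ : (π : ℂ) - Ω ≠ 0 := by exact_mod_cast (sub_pos.2 hΩπ).ne'
  have hΩ' : (Ω : ℂ) ≠ 0 := by exact_mod_cast hΩ0.ne'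
  refine ⟨hnorm.subtype _, ?_⟩
  rw [htsum]
  push_cast
  field_simp
end

section
/- Let ω₀ ∈ (0, π], m ∈ ℕ, M = {0, 1, ..., m}, and σ₀, ..., σ_m ≥ 0. For every function F from the set of maps (ℤ \ M) → ℂ to ℂ^{m+1} and every p ∈ {0, ..., m}, there exists a sequence x : ℤ → ℂ with Σ_{t∈ℤ} |t|^m |x(t)| < ∞ and |Σ_{t∈ℤ} (−it)^k e^{−iω₀t} x(t)| ≤ σ_k for all k ∈ {0, ..., m}, such that, setting η̃ = F(x restricted to ℤ \ M) − (x(0), ..., x(m)) ∈ ℂ^{m+1}, one has |(B(ω₀) · η̃)_p| ≥ σ_p. -/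
/-!
Le Cam's two-point argument. Since `B(ω₀)` factors as a Vandermonde matrix in the distinct
nodes `-ik` times an invertible diagonal matrix, there is a vector `η` with
`B(ω₀) η = σ_p e_p`. The sequences `x = ±η`, supported on `{0, …, m}`, both lie in `X_σ`
and have the same restriction to `ℤ \ M`, so `F` returns the same value `v` for both, while
`(B(ω₀) η̃)_p = (B(ω₀) v)_p ∓ σ_p`. Two points at distance `2σ_p` cannot both lie within
`σ_p` of one value.
-/

open Real

/-- The matrix `B(ω)` with entries `B(ω)_{p,k} = (-i k)^p e^{-iωk}`. -/
noncomputable def Bmat (m : ℕ) (ω : ℝ) : Matrix (Fin (m + 1)) (Fin (m + 1)) ℂ :=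
  Matrix.of fun p k : Fin (m + 1) =>
    (-Complex.I * ((k : ℕ) : ℂ)) ^ (p : ℕ) * Complex.exp (-Complex.I * (ω : ℂ) * ((k : ℕ) : ℂ))

open Matrix Complex

theorem le_norm_sub_or_le_norm_add {E : Type*} [SeminormedAddCommGroup E] [NormedSpace ℝ E]
    (a v : E) : ‖v‖ ≤ ‖a - v‖ ∨ ‖v‖ ≤ ‖a + v‖ := by
  have : 2 * ‖v‖ ≤ ‖a + v‖ + ‖a - v‖ :=
    calc 2 * ‖v‖ = ‖(a + v) - (a - v)‖ := by
          rw [show (a + v) - (a - v) = (2 : ℝ) • v by module, norm_smul, Real.norm_two]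
      _ ≤ ‖a + v‖ + ‖a - v‖ := norm_sub_le _ _
  by_contra! h
  linarith [h.1, h.2]

theorem Bmat_eq_vandermonde_mul_diagonal (m : ℕ) (ω : ℝ) :
    Bmat m ω = (vandermonde fun k : Fin (m + 1) => -I * ((k : ℕ) : ℂ))ᵀ *
      diagonal fun k : Fin (m + 1) => exp (-I * ω * ((k : ℕ) : ℂ)) := by
  ext p k
  simp [Bmat, mul_diagonal, vandermonde_apply]

theorem isUnit_Bmat (m : ℕ) (ω : ℝ) : IsUnit (Bmat m ω) := by
  have hinj : Function.Injective fun k : Fin (m + 1) => -I * ((k : ℕ) : ℂ) := fun a b h =>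
    Fin.ext <| Nat.cast_injective (mul_left_cancel₀ (neg_ne_zero.2 I_ne_zero) h)
  rw [isUnit_iff_isUnit_det, Bmat_eq_vandermonde_mul_diagonal, det_mul, det_transpose,
    det_diagonal]
  exact (det_vandermonde_ne_zero_iff.2 hinj).isUnit.mul
    (Finset.prod_ne_zero_iff.2 fun k _ => Complex.exp_ne_zero _).isUnit

noncomputable def extendByZero {m : ℕ} {E : Type*} [Zero E] (η : Fin (m + 1) → E) : ℤ → E :=
  Function.extend (fun k : Fin (m + 1) => ((k : ℕ) : ℤ)) η 0

section extendByZero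

variable {m : ℕ} {E : Type*}

theorem extendByZero_natCast [Zero E] (η : Fin (m + 1) → E) (k : Fin (m + 1)) :
    extendByZero η ((k : ℕ) : ℤ) = η k :=
  (Nat.cast_injective.comp Fin.val_injective).extend_apply _ _ _

theorem support_extendByZero_subset [Zero E] (η : Fin (m + 1) → E) :
    Function.support (extendByZero η) ⊆ Set.range fun k : Fin (m + 1) => ((k : ℕ) : ℤ) := by
  intro t ht
  by_contra hr
  exact ht (Function.extend_apply' _ _ _ fun ⟨k, hk⟩ => hr ⟨k, hk⟩)

theorem extendByZero_eq_zero [Zero E] (η : Fin (m + 1) → E) {t : ℤ}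
    (ht : t ∉ Set.Icc (0 : ℤ) m) : extendByZero η t = 0 := by
  by_contra h
  obtain ⟨k, rfl⟩ := support_extendByZero_subset η h
  exact ht ⟨Int.natCast_nonneg _, Int.ofNat_le.2 (Nat.le_of_lt_succ k.isLt)⟩

theorem summable_mul_norm_extendByZero [SeminormedAddCommGroup E] (g : ℤ → ℝ)
    (η : Fin (m + 1) → E) : Summable fun t => g t * ‖extendByZero η t‖ := by
  refine summable_of_hasFiniteSupport <|
    (Set.finite_range fun k : Fin (m + 1) => ((k : ℕ) : ℤ)).subset fun t ht => ?_
  exact support_extendByZero_subset η <| ne_zero_of_norm_ne_zero <|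
    Function.support_mul_subset_right g (fun t => ‖extendByZero η t‖) ht

theorem tsum_moment_extendByZero (ω : ℝ) (η : Fin (m + 1) → ℂ) (k : Fin (m + 1)) :
    ∑' t : ℤ, (-I * (t : ℂ)) ^ (k : ℕ) * exp (-I * (ω : ℂ) * (t : ℂ)) * extendByZero η t =
      (Bmat m ω *ᵥ η) k := by
  rw [← (Nat.cast_injective.comp Fin.val_injective).tsum_eq fun t ht =>
      support_extendByZero_subset η (Function.support_mul_subset_right _ _ ht), tsum_fintype]
  simp [mulVec, dotProduct, Bmat, extendByZero_natCast, mul_assoc]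

end extendByZero

theorem minimax_lower_bound_general (ω₀ : ℝ) (m : ℕ)
    (σ : Fin (m + 1) → ℝ) (hσ : ∀ p, 0 ≤ σ p)
    (F : ({t : ℤ // t ∉ Set.Icc (0 : ℤ) m} → ℂ) → (Fin (m + 1) → ℂ))
    (p : Fin (m + 1)) :
    ∃ x : ℤ → ℂ,
      (Summable fun t : ℤ => |(t : ℝ)| ^ m * ‖x t‖) ∧
      (∀ k : Fin (m + 1),
        ‖∑' t : ℤ, (-Complex.I * (t : ℂ)) ^ (k : ℕ) *
          Complex.exp (-Complex.I * (ω₀ : ℂ) * (t : ℂ)) * x t‖ ≤ σ k) ∧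
      σ p ≤ ‖(Bmat m ω₀).mulVec
        (fun k : Fin (m + 1) =>
          F (fun t : {t : ℤ // t ∉ Set.Icc (0 : ℤ) m} => x (t : ℤ)) k - x ((k : ℕ) : ℤ)) p‖ := by
  obtain ⟨η, hη⟩ : ∃ η, Bmat m ω₀ *ᵥ η = Pi.single p (σ p : ℂ) :=
    mulVec_surjective_iff_isUnit.2 (isUnit_Bmat m ω₀) _
  have hrestrict (ε : ℂ) :
      (fun t : {t : ℤ // t ∉ Set.Icc (0 : ℤ) m} => extendByZero (ε • η) (t : ℤ)) = 0 :=
    funext fun t => extendByZero_eq_zero _ t.2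
  -- Every `ε • η` with `|ε| = 1` is admissible and the estimator only sees `F 0`.
  have witness (ε : ℂ) (hε : ‖ε‖ = 1) :
      (∀ k : Fin (m + 1), ‖∑' t : ℤ, (-I * (t : ℂ)) ^ (k : ℕ) * exp (-I * (ω₀ : ℂ) * (t : ℂ)) *
        extendByZero (ε • η) t‖ ≤ σ k) ∧
      (Bmat m ω₀ *ᵥ fun k => F (fun t : {t : ℤ // t ∉ Set.Icc (0 : ℤ) m} =>
        extendByZero (ε • η) t) k - extendByZero (ε • η) ((k : ℕ) : ℤ)) p =
        (Bmat m ω₀ *ᵥ F 0) p - ε * σ p := by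
    simp only [tsum_moment_extendByZero, hrestrict, extendByZero_natCast]
    refine ⟨fun k => ?_, ?_⟩
    · rw [mulVec_smul, hη, Pi.smul_apply, norm_smul, hε, one_mul]
      rcases eq_or_ne k p with rfl | hk
      · simp [abs_of_nonneg (hσ k)]
      · simp [hk, hσ k]
    · rw [show (fun k => F 0 k - (ε • η) k) = F 0 - ε • η from rfl, mulVec_sub, mulVec_smul, hη]
      simp
  rcases le_norm_sub_or_le_norm_add ((Bmat m ω₀ *ᵥ F 0) p) (σ p : ℂ) with h | h <;>
    rw [Complex.norm_of_nonneg (hσ p)] at h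
  · obtain ⟨hmom, hval⟩ := witness 1 (by simp)
    exact ⟨_, summable_mul_norm_extendByZero _ _, hmom, by rwa [hval, one_mul]⟩
  · obtain ⟨hmom, hval⟩ := witness (-1) (by simp)
    exact ⟨_, summable_mul_norm_extendByZero _ _, hmom, by
      rwa [hval, neg_one_mul, sub_neg_eq_add]⟩

theorem minimax_lower_bound (ω₀ : ℝ) (hω₀ : ω₀ ∈ Set.Ioc 0 Real.pi) (m : ℕ)
    (σ : Fin (m + 1) → ℝ) (hσ : ∀ p, 0 ≤ σ p)
    (F : ({t : ℤ // t ∉ Set.Icc (0 : ℤ) m} → ℂ) → (Fin (m + 1) → ℂ))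
    (p : Fin (m + 1)) :
    ∃ x : ℤ → ℂ,
      (Summable fun t : ℤ => |(t : ℝ)| ^ m * ‖x t‖) ∧
      (∀ k : Fin (m + 1),
        ‖∑' t : ℤ, (-Complex.I * (t : ℂ)) ^ (k : ℕ) *
          Complex.exp (-Complex.I * (ω₀ : ℂ) * (t : ℂ)) * x t‖ ≤ σ k) ∧
      σ p ≤ ‖(Bmat m ω₀).mulVec
        (fun k : Fin (m + 1) =>
          F (fun t : {t : ℤ // t ∉ Set.Icc (0 : ℤ) m} => x (t : ℤ)) k - x ((k : ℕ) : ℤ)) p‖ :=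
  minimax_lower_bound_general ω₀ m σ hσ F p
end
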